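/- For any two nodes u and v in a connected graph G with n vertices, and any shortest path P between u and v, the sum of the degrees of the vertices on P is at most 3n. -/

import Mathlib

/-!
Every vertex `w` has at most three neighbours on a shortest path `P`: two neighbours of `w` are at
distance at most `2`, and along a shortest path the distance between two vertices is the
difference of their positions, so the neighbours of `w` occupy at most three consecutive
positions. Counting the pairs (vertex of `P`, neighbour) from the other side, the degree sum
over `P` is at most `3 n`.
-/

namespace Finset

theorem card_le_of_forall_sub_le {s : Finset ℕ} {k : ℕ}
    (h : ∀ i ∈ s, ∀ j ∈ s, j - i ≤ k) : #s ≤ k + 1 := by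
  rcases s.eq_empty_or_nonempty with rfl | hs
  · simp
  have hsub : s ⊆ Icc (s.min' hs) (s.min' hs + k) := fun j hj =>
    mem_Icc.2 ⟨s.min'_le j hj, by have := h _ (s.min'_mem hs) j hj; omega⟩
  have := card_le_card hsub
  rw [Nat.card_Icc] at this
  omega

end Finset

open Finset

namespace SimpleGraph

variable {V : Type*} {G : SimpleGraph V}

theorem dist_le_two_of_adj_of_adj {w x y : V} (hx : G.Adj w x) (hy : G.Adj w y) :
    G.dist x y ≤ 2 :=
  dist_le (.cons hx.symm (.cons hy .nil))

namespace Walk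

theorem sub_le_dist_getVert_of_length_eq_dist {u v : V} {p : G.Walk u v}
    (hp : p.length = G.dist u v) (i : ℕ) {j : ℕ} (hj : j ≤ p.length) :
    j - i ≤ G.dist (p.getVert i) (p.getVert j) := by
  have hu : G.dist u v ≤ G.dist u (p.getVert i) + G.dist (p.getVert i) v :=
    (p.take i).reachable.dist_triangle_left v
  have hv : G.dist (p.getVert i) v ≤
      G.dist (p.getVert i) (p.getVert j) + G.dist (p.getVert j) v :=
    (p.drop j).reachable.dist_triangle_right _
  have hi : G.dist u (p.getVert i) ≤ i := by
    have := dist_le (p.take i)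
    rw [take_length] at this
    omega
  have hjv : G.dist (p.getVert j) v ≤ p.length - j := drop_length p j ▸ dist_le (p.drop j)
  omega

theorem card_filter_adj_support_le_three_of_length_eq_dist [DecidableEq V] [DecidableRel G.Adj]
    {u v : V} {p : G.Walk u v} (hp : p.length = G.dist u v) (w : V) :
    #(p.support.toFinset.filter (G.Adj w)) ≤ 3 := by
  set positions := (range (p.length + 1)).filter (fun i => G.Adj w (p.getVert i))
  have hsub : p.support.toFinset.filter (G.Adj w) ⊆ positions.image p.getVert := by
    intro x hx
    obtain ⟨hxp, hwx⟩ := mem_filter.1 hx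
    obtain ⟨i, rfl, hi⟩ := mem_support_iff_exists_getVert.1 (List.mem_toFinset.1 hxp)
    exact mem_image_of_mem _ (mem_filter.2 ⟨mem_range.2 (Nat.lt_succ_of_le hi), hwx⟩)
  have hclose : ∀ i ∈ positions, ∀ j ∈ positions, j - i ≤ 2 := by
    intro i hi j hj
    obtain ⟨-, hwi⟩ := mem_filter.1 hi
    obtain ⟨hj, hwj⟩ := mem_filter.1 hj
    exact (sub_le_dist_getVert_of_length_eq_dist hp i (Nat.le_of_lt_succ (mem_range.1 hj))).trans
      (dist_le_two_of_adj_of_adj hwi hwj)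
  calc #(p.support.toFinset.filter (G.Adj w))
      ≤ #(positions.image p.getVert) := card_le_card hsub
    _ ≤ #positions := card_image_le
    _ ≤ 3 := card_le_of_forall_sub_le hclose

end Walk

theorem sum_degree_le_of_card_filter_adj_le [Fintype V] [DecidableRel G.Adj]
    (s : Finset V) {k : ℕ} (h : ∀ w, #(s.filter (G.Adj w)) ≤ k) :
    ∑ x ∈ s, G.degree x ≤ k * Fintype.card V := by
  calc ∑ x ∈ s, G.degree x
      = ∑ x ∈ s, #(univ.bipartiteAbove G.Adj x) := by
        simp only [bipartiteAbove, ← neighborFinset_eq_filter, card_neighborFinset_eq_degree]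
    _ = ∑ w, #(s.bipartiteBelow G.Adj w) := sum_card_bipartiteAbove_eq_sum_card_bipartiteBelow _
    _ ≤ ∑ _w : V, k := sum_le_sum fun w _ => by
        simpa only [bipartiteBelow, G.adj_comm _ w] using h w
    _ = k * Fintype.card V := by rw [sum_const, card_univ, smul_eq_mul, mul_comm]

end SimpleGraph

theorem shortest_path_degree_sum_general {V : Type*} [Fintype V] [DecidableEq V]
    (G : SimpleGraph V) [DecidableRel G.Adj]
    (u v : V) (p : G.Walk u v) (hshort : p.length = G.dist u v) :
    (p.support.map (fun x => G.degree x)).sum ≤ 3 * Fintype.card V := by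
  have hnodup : p.support.Nodup := (p.isPath_of_length_eq_dist hshort).support_nodup
  rw [← List.sum_toFinset _ hnodup]
  exact G.sum_degree_le_of_card_filter_adj_le _
    (SimpleGraph.Walk.card_filter_adj_support_le_three_of_length_eq_dist hshort)

/-- The sum of the degrees of the vertices on a shortest path between two nodes
of a connected `n`-vertex graph is at most `3 n`. -/
theorem shortest_path_degree_sum {V : Type*} [Fintype V] [DecidableEq V]
    (G : SimpleGraph V) [DecidableRel G.Adj] (hconn : G.Connected)
    (u v : V) (p : G.Walk u v) (hshort : p.length = G.dist u v) :
    (p.support.map (fun x => G.degree x)).sum ≤ 3 * Fintype.card V :=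
  shortest_path_degree_sum_general G u v p hshort
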